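/- arXiv:1901.08484 — 2 statements merged into one kernel-verified Lean document; each statement's English description precedes it below -/
import Mathlib

section
/- Along any solution F(t) of the system F̈ᵢₖ + ∂U/∂Fᵢₖ + Σⱼ 𝓛ᵢⱼ Ḟⱼₖ − δω²𝒟Fᵢₖ = 0, the quantity Ẽ = ½Σᵢₖ(Ḟᵢₖ)² + U − ½ω²(F₁₁² + F₁₂² + k(F₂₁² + F₂₂²)) is constant in time. -/
open Matrix
attribute [local instance] Matrix.normedAddCommGroup Matrix.normedSpace

/-!
Pair the equation of motion with `Ḟ` in the Frobenius inner product `⟨A, B⟩ = Σᵢₖ AᵢₖBᵢₖ`.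
The kinetic term differentiates to `⟨Ḟ, F̈⟩`, the centrifugal term `½ω²⟨F, 𝒟F⟩` to `ω²⟨Ḟ, 𝒟F⟩`
because `𝒟` is symmetric, and the potential to `⟨Ḟ, ∂U/∂F⟩` by Jacobi's formula
`d(det F) = ⟨(adj F)ᵀ, Ḟ⟩`. The Coriolis term contributes nothing, since `⟨Ḟ, LḞ⟩ = 0` for the
skew matrix `L`. Hence `dẼ/dt` is the pairing of `Ḟ` with the left-hand side of the equation.
-/

namespace Matrix

variable {m n : Type*} [Fintype m] [Fintype n]

def frobeniusInner (A B : Matrix m n ℝ) : ℝ := ∑ i, ∑ j, A i j * B i j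

theorem frobeniusInner_comm (A B : Matrix m n ℝ) : frobeniusInner A B = frobeniusInner B A := by
  simp only [frobeniusInner, mul_comm]

theorem frobeniusInner_add_right (A B C : Matrix m n ℝ) :
    frobeniusInner A (B + C) = frobeniusInner A B + frobeniusInner A C := by
  simp only [frobeniusInner, add_apply, mul_add, Finset.sum_add_distrib]

theorem frobeniusInner_sub_right (A B C : Matrix m n ℝ) :
    frobeniusInner A (B - C) = frobeniusInner A B - frobeniusInner A C := by
  simp only [frobeniusInner, sub_apply, mul_sub, Finset.sum_sub_distrib]

theorem frobeniusInner_smul_right (c : ℝ) (A B : Matrix m n ℝ) :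
    frobeniusInner A (c • B) = c * frobeniusInner A B := by
  simp only [frobeniusInner, smul_apply, smul_eq_mul, Finset.mul_sum]
  exact Finset.sum_congr rfl fun _ _ => Finset.sum_congr rfl fun _ _ => by ring

theorem frobeniusInner_smul_left (c : ℝ) (A B : Matrix m n ℝ) :
    frobeniusInner (c • A) B = c * frobeniusInner A B := by
  rw [frobeniusInner_comm, frobeniusInner_smul_right, frobeniusInner_comm]

@[simp]
theorem frobeniusInner_zero_right (A : Matrix m n ℝ) : frobeniusInner A 0 = 0 := by
  simp [frobeniusInner]

theorem frobeniusInner_eq_trace (A B : Matrix m n ℝ) : frobeniusInner A B = trace (Aᵀ * B) := by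
  simp only [frobeniusInner, trace, diag_apply, mul_apply, transpose_apply]
  exact Finset.sum_comm

theorem frobeniusInner_mul_right (M : Matrix m m ℝ) (A B : Matrix m n ℝ) :
    frobeniusInner A (M * B) = frobeniusInner (Mᵀ * A) B := by
  rw [frobeniusInner_eq_trace, frobeniusInner_eq_trace, transpose_mul, transpose_transpose,
    Matrix.mul_assoc]

theorem frobeniusInner_mul_self_eq_zero {M : Matrix m m ℝ} (hM : Mᵀ = -M) (A : Matrix m n ℝ) :
    frobeniusInner A (M * A) = 0 := by
  have h : frobeniusInner A (M * A) = -frobeniusInner A (M * A) := calc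
    frobeniusInner A (M * A) = frobeniusInner (Mᵀ * A) A := frobeniusInner_mul_right M A A
    _ = frobeniusInner A (-(M * A)) := by rw [hM, Matrix.neg_mul, frobeniusInner_comm]
    _ = -frobeniusInner A (M * A) := by
      simp only [frobeniusInner, neg_apply, mul_neg, Finset.sum_neg_distrib]
  linarith

omit [Fintype m] in
theorem _root_.HasDerivAt.matrix_apply {F : ℝ → Matrix m n ℝ} {F' : Matrix m n ℝ} {t : ℝ}
    (hF : HasDerivAt F F' t) (i : m) (j : n) : HasDerivAt (fun s => F s i j) (F' i j) t :=
  hasDerivAt_pi.1 (hasDerivAt_pi.1 hF i) j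

theorem _root_.HasDerivAt.frobeniusInner {A B : ℝ → Matrix m n ℝ} {A' B' : Matrix m n ℝ} {t : ℝ}
    (hA : HasDerivAt A A' t) (hB : HasDerivAt B B' t) :
    HasDerivAt (fun s => frobeniusInner (A s) (B s))
      (frobeniusInner A' (B t) + frobeniusInner (A t) B') t := by
  unfold Matrix.frobeniusInner
  simp only [← Finset.sum_add_distrib]
  exact HasDerivAt.fun_sum fun i _ => HasDerivAt.fun_sum fun j _ =>
    (hA.matrix_apply i j).fun_mul (hB.matrix_apply i j)

theorem _root_.HasDerivAt.const_mul_matrix [DecidableEq m] (M : Matrix m m ℝ)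
    {F : ℝ → Matrix m n ℝ} {F' : Matrix m n ℝ} {t : ℝ} (hF : HasDerivAt F F' t) :
    HasDerivAt (fun s => M * F s) (M * F') t :=
  (mulLeftLinearMap n ℝ M).toContinuousLinearMap.hasFDerivAt.comp_hasDerivAt t hF

theorem hasDerivAt_det_fin_two {F : ℝ → Matrix (Fin 2) (Fin 2) ℝ} {F' : Matrix (Fin 2) (Fin 2) ℝ}
    {t : ℝ} (hF : HasDerivAt F F' t) :
    HasDerivAt (fun s => (F s).det) (frobeniusInner (F t).adjugateᵀ F') t := by
  have h_det : (fun s => (F s).det) = fun s => F s 0 0 * F s 1 1 - F s 0 1 * F s 1 0 :=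
    funext fun s => det_fin_two (F s)
  rw [h_det]
  refine (((hF.matrix_apply 0 0).fun_mul (hF.matrix_apply 1 1)).fun_sub
    ((hF.matrix_apply 0 1).fun_mul (hF.matrix_apply 1 0))).congr_deriv ?_
  simp only [frobeniusInner, adjugate_fin_two, Fin.sum_univ_two, transpose_apply, of_apply,
    cons_val', cons_val_zero, cons_val_one, empty_val', cons_val_fin_one]
  ring

theorem hasDerivAt_const_mul_det_rpow_fin_two (c p : ℝ) {F : ℝ → Matrix (Fin 2) (Fin 2) ℝ}
    {F' : Matrix (Fin 2) (Fin 2) ℝ} {t : ℝ} (hF : HasDerivAt F F' t) (hdet : (F t).det ≠ 0) :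
    HasDerivAt (fun s => c * (F s).det ^ p)
      (frobeniusInner ((c * p * (F t).det ^ (p - 1)) • (F t).adjugateᵀ) F') t := by
  refine (((Real.hasDerivAt_rpow_const (Or.inl hdet)).comp t
    (hasDerivAt_det_fin_two hF)).const_mul c).congr_deriv ?_
  rw [frobeniusInner_smul_left]
  ring

end Matrix

section Energy

variable {m n : Type*} [Fintype m] [Fintype n]
variable {F F' F'' G : ℝ → Matrix m n ℝ} {V : ℝ → ℝ} {L D : Matrix m m ℝ} (ω : ℝ)

theorem hasDerivAt_energy [DecidableEq m] (hL : Lᵀ = -L) (hD : Dᵀ = D) {t : ℝ}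
    (hF : HasDerivAt F (F' t) t) (hF' : HasDerivAt F' (F'' t) t)
    (hV : HasDerivAt V (frobeniusInner (G t) (F' t)) t) :
    HasDerivAt
      (fun s => 1 / 2 * frobeniusInner (F' s) (F' s) + V s -
        1 / 2 * ω ^ 2 * frobeniusInner (F s) (D * F s))
      (frobeniusInner (F' t) (F'' t + G t + (2 * ω) • (L * F' t) - ω ^ 2 • (D * F t))) t := by
  have hK := hF'.frobeniusInner hF'
  have hP := hF.frobeniusInner (hF.const_mul_matrix D)
  refine (((hK.const_mul (1 / 2)).add hV).sub (hP.const_mul (1 / 2 * ω ^ 2))).congr_deriv ?_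
  rw [frobeniusInner_sub_right, frobeniusInner_add_right, frobeniusInner_add_right,
    frobeniusInner_smul_right, frobeniusInner_smul_right, frobeniusInner_mul_self_eq_zero hL,
    frobeniusInner_mul_right D (F t), hD, frobeniusInner_comm (F'' t),
    frobeniusInner_comm (G t), frobeniusInner_comm (D * F t)]
  ring

theorem energy_eq_of_ode [DecidableEq m] (hL : Lᵀ = -L) (hD : Dᵀ = D)
    (hF : ∀ t, HasDerivAt F (F' t) t) (hF' : ∀ t, HasDerivAt F' (F'' t) t)
    (hV : ∀ t, HasDerivAt V (frobeniusInner (G t) (F' t)) t)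
    (hode : ∀ t, F'' t + G t + (2 * ω) • (L * F' t) - ω ^ 2 • (D * F t) = 0) (t₁ t₂ : ℝ) :
    1 / 2 * frobeniusInner (F' t₁) (F' t₁) + V t₁ -
        1 / 2 * ω ^ 2 * frobeniusInner (F t₁) (D * F t₁) =
      1 / 2 * frobeniusInner (F' t₂) (F' t₂) + V t₂ -
        1 / 2 * ω ^ 2 * frobeniusInner (F t₂) (D * F t₂) := by
  have hE t := hasDerivAt_energy ω hL hD (hF t) (hF' t) (hV t)
  simp only [hode, frobeniusInner_zero_right] at hE
  exact is_const_of_deriv_eq_zero (fun t => (hE t).differentiableAt) (fun t => (hE t).deriv) t₁ t₂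

end Energy

theorem energy_first_integral_general (U₀ γ ω k : ℝ)
    (F F' F'' : ℝ → Matrix (Fin 2) (Fin 2) ℝ)
    (hdet : ∀ t, 0 < (F t).det)
    (hF : ∀ t, HasDerivAt F (F' t) t)
    (hF' : ∀ t, HasDerivAt F' (F'' t) t)
    (hode : ∀ t : ℝ,
      F'' t + (U₀ * (1 - γ) * (F t).det ^ (-γ)) •
          !![F t 1 1, -(F t 1 0); -(F t 0 1), F t 0 0] +
        (2 * ω) • (!![0, -1; 1, 0] * F' t) - ω ^ 2 • (!![1, 0; 0, k] * F t) = 0) :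
    let Etil : ℝ → ℝ := fun t =>
      (1 / 2) * ((F' t 0 0) ^ 2 + (F' t 0 1) ^ 2 + (F' t 1 0) ^ 2 + (F' t 1 1) ^ 2) +
        U₀ * (F t).det ^ (1 - γ) -
        (1 / 2) * ω ^ 2 *
          ((F t 0 0) ^ 2 + (F t 0 1) ^ 2 + k * ((F t 1 0) ^ 2 + (F t 1 1) ^ 2))
    ∀ t₁ t₂ : ℝ, Etil t₁ = Etil t₂ := by
  intro Etil t₁ t₂
  have hcof : ∀ t, !![F t 1 1, -(F t 1 0); -(F t 0 1), F t 0 0] = (F t).adjugateᵀ := fun t => by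
    ext i j
    fin_cases i <;> fin_cases j <;> simp [adjugate_fin_two]
  have hV : ∀ t, HasDerivAt (fun s => U₀ * (F s).det ^ (1 - γ))
      (frobeniusInner ((U₀ * (1 - γ) * (F t).det ^ (-γ)) •
        !![F t 1 1, -(F t 1 0); -(F t 0 1), F t 0 0]) (F' t)) t := fun t => by
    rw [hcof, show -γ = 1 - γ - 1 by ring]
    exact hasDerivAt_const_mul_det_rpow_fin_two U₀ (1 - γ) (hF t) (hdet t).ne'
  have hE : ∀ t, Etil t = 1 / 2 * frobeniusInner (F' t) (F' t) + U₀ * (F t).det ^ (1 - γ) -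
      1 / 2 * ω ^ 2 * frobeniusInner (F t) (!![1, 0; 0, k] * F t) := fun t => by
    simp only [Etil, frobeniusInner, Fin.sum_univ_two, mul_apply, of_apply, cons_val',
      cons_val_fin_one, cons_val_zero, cons_val_one, one_mul, zero_mul, add_zero, zero_add]
    ring
  rw [hE, hE]
  exact energy_eq_of_ode ω (by ext i j; fin_cases i <;> fin_cases j <;> simp)
    (by ext i j; fin_cases i <;> fin_cases j <;> simp) hF hF' hV hode t₁ t₂

/-- Along any solution `F(t)` of `F̈ᵢₖ + ∂U/∂Fᵢₖ + Σⱼ 𝓛ᵢⱼḞⱼₖ − δω²𝒟Fᵢₖ = 0`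
(with `δ = 1`, `𝓛 = 2ωL`, `𝒟 = diag(1,k)`, `U = U₀(det F)^(1−γ)`, so that
`∂U/∂Fᵢₖ = U₀(1−γ)(det F)^(−γ)·cofᵢₖ(F)`), the energy
`Ẽ = ½Σᵢₖ(Ḟᵢₖ)² + U − ½ω²(F₁₁² + F₁₂² + k(F₂₁² + F₂₂²))` is constant in time. -/
theorem energy_first_integral (U₀ γ ω k : ℝ) (hU₀ : 0 < U₀) (hγ : 1 < γ)
    (F F' F'' : ℝ → Matrix (Fin 2) (Fin 2) ℝ)
    (hdet : ∀ t, 0 < (F t).det)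
    (hF : ∀ t, HasDerivAt F (F' t) t)
    (hF' : ∀ t, HasDerivAt F' (F'' t) t)
    (hode : ∀ t : ℝ,
      F'' t + (U₀ * (1 - γ) * (F t).det ^ (-γ)) •
          !![F t 1 1, -(F t 1 0); -(F t 0 1), F t 0 0] +
        (2 * ω) • (!![0, -1; 1, 0] * F' t) - ω ^ 2 • (!![1, 0; 0, k] * F t) = 0) :
    let Etil : ℝ → ℝ := fun t =>
      (1 / 2) * ((F' t 0 0) ^ 2 + (F' t 0 1) ^ 2 + (F' t 1 0) ^ 2 + (F' t 1 1) ^ 2) +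
        U₀ * (F t).det ^ (1 - γ) -
        (1 / 2) * ω ^ 2 *
          ((F t 0 0) ^ 2 + (F t 0 1) ^ 2 + k * ((F t 1 0) ^ 2 + (F t 1 1) ^ 2))
    ∀ t₁ t₂ : ℝ, Etil t₁ = Etil t₂ :=
  energy_first_integral_general U₀ γ ω k F F' F'' hdet hF hF' hode
end

section
/- Along any solution of F̈ᵢₖ + ∂U/∂Fᵢₖ + 2ω(LḞ)ᵢₖ − ω²Fᵢₖ = 0 (case δ = 1, k = 1, l = 2ω), with J = F₁₁Ḟ₂₁ + F₁₂Ḟ₂₂ − F₂₁Ḟ₁₁ − F₂₂Ḟ₁₂ and G = Σᵢₖ Fᵢₖ², the quantity A = J + ωG is constant in time. -/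
/-!
`J` is the angular momentum `⟪L F, Ḟ⟫` of the motion for the Frobenius pairing, so along a solution
`J̇ = ⟪L F, F̈⟫`. The potential force is proportional to `∇ det F = (adj F)ᵀ` and exerts no torque,
since `det` is invariant under rotations `F ↦ R F`; the centrifugal force `ω² F` is radial; and
the Coriolis force `-2ω L Ḟ` contributes `-2ω ⟪F, Ḟ⟫ = -ω Ġ`. Hence `J + ω G` is constant.
-/

open Matrix
attribute [local instance] Matrix.normedAddCommGroup Matrix.normedSpace

theorem LinearMap.hasDerivAt_of_bilinear {𝕜 E F G : Type*} [NontriviallyNormedField 𝕜]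
    [CompleteSpace 𝕜] [NormedAddCommGroup E] [NormedSpace 𝕜 E] [FiniteDimensional 𝕜 E]
    [NormedAddCommGroup F] [NormedSpace 𝕜 F] [FiniteDimensional 𝕜 F]
    [NormedAddCommGroup G] [NormedSpace 𝕜 G] (B : E →ₗ[𝕜] F →ₗ[𝕜] G)
    {u : 𝕜 → E} {v : 𝕜 → F} {u' : E} {v' : F} {t : 𝕜}
    (hu : HasDerivAt u u' t) (hv : HasDerivAt v v' t) :
    HasDerivAt (fun s => B (u s) (v s)) (B (u t) v' + B u' (v t)) t :=
  B.toContinuousBilinearMap.hasDerivAt_of_bilinear (fun _ => hu) (fun _ => hv)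

section Frobenius

variable {m n R : Type*} [Fintype m] [Fintype n] [CommSemiring R]

def frobeniusForm : Matrix m n R →ₗ[R] Matrix m n R →ₗ[R] R :=
  LinearMap.mk₂ R (fun X Y => ∑ i, ∑ j, X i j * Y i j)
    (fun _ _ _ => by simp only [Matrix.add_apply, add_mul, Finset.sum_add_distrib])
    (fun _ _ _ => by simp only [Matrix.smul_apply, smul_eq_mul, mul_assoc, Finset.mul_sum])
    (fun _ _ _ => by simp only [Matrix.add_apply, mul_add, Finset.sum_add_distrib])
    (fun _ _ _ => by simp only [Matrix.smul_apply, smul_eq_mul, mul_left_comm, Finset.mul_sum])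

theorem frobeniusForm_apply (X Y : Matrix m n R) :
    frobeniusForm X Y = ∑ i, ∑ j, X i j * Y i j := rfl

theorem frobeniusForm_comm (X Y : Matrix m n R) : frobeniusForm X Y = frobeniusForm Y X := by
  simp only [frobeniusForm_apply, mul_comm]

end Frobenius

theorem adjugate_transpose_fin_two {α : Type*} [CommRing α] (X : Matrix (Fin 2) (Fin 2) α) :
    (adjugate X)ᵀ = !![X 1 1, -X 1 0; -X 0 1, X 0 0] := by
  rw [adjugate_fin_two]; ext i j; fin_cases i <;> fin_cases j <;> rfl

def angularMomentum : Matrix (Fin 2) (Fin 2) ℝ →ₗ[ℝ] Matrix (Fin 2) (Fin 2) ℝ →ₗ[ℝ] ℝ :=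
  frobeniusForm ∘ₗ LinearMap.mulLeft ℝ !![0, -1; 1, 0]

theorem angularMomentum_apply (X V : Matrix (Fin 2) (Fin 2) ℝ) :
    angularMomentum X V = X 0 0 * V 1 0 + X 0 1 * V 1 1 - X 1 0 * V 0 0 - X 1 1 * V 0 1 := by
  simp only [angularMomentum, LinearMap.comp_apply, LinearMap.mulLeft_apply, frobeniusForm_apply,
    Fin.sum_univ_two, mul_apply, of_apply, cons_val', cons_val_zero, cons_val_one, cons_val_fin_one]
  ring

theorem angularMomentum_self (X : Matrix (Fin 2) (Fin 2) ℝ) : angularMomentum X X = 0 := by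
  rw [angularMomentum_apply]; ring

theorem angularMomentum_rotate (X V : Matrix (Fin 2) (Fin 2) ℝ) :
    angularMomentum X (!![0, -1; 1, 0] * V) = frobeniusForm X V := by
  simp only [angularMomentum_apply, frobeniusForm_apply, Fin.sum_univ_two, mul_apply, of_apply,
    cons_val', cons_val_zero, cons_val_one, cons_val_fin_one]
  ring

theorem angularMomentum_adjugate_transpose (X : Matrix (Fin 2) (Fin 2) ℝ) :
    angularMomentum X (adjugate X)ᵀ = 0 := by
  simp only [angularMomentum_apply, adjugate_fin_two, transpose_apply, of_apply, cons_val',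
    cons_val_zero, cons_val_one, cons_val_fin_one]
  ring

theorem angularMomentum_eq_of_accel {c ω : ℝ} {X V W : Matrix (Fin 2) (Fin 2) ℝ}
    (h : W + c • (adjugate X)ᵀ + (2 * ω) • (!![0, -1; 1, 0] * V) - ω ^ 2 • X = 0) :
    angularMomentum X W = -(2 * ω * frobeniusForm X V) := by
  have hW : W = ω ^ 2 • X - c • (adjugate X)ᵀ - (2 * ω) • (!![0, -1; 1, 0] * V) := by
    rw [← sub_eq_zero, ← h]; abel
  simp only [hW, map_sub, map_smul, angularMomentum_self, angularMomentum_adjugate_transpose,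
    angularMomentum_rotate, smul_eq_mul]
  ring

theorem first_integral_A_general (U₀ γ ω : ℝ)
    (F F' F'' : ℝ → Matrix (Fin 2) (Fin 2) ℝ)
    (hF : ∀ t, HasDerivAt F (F' t) t)
    (hF' : ∀ t, HasDerivAt F' (F'' t) t)
    (hode : ∀ t : ℝ,
      F'' t + (U₀ * (1 - γ) * (F t).det ^ (-γ)) •
          !![F t 1 1, -(F t 1 0); -(F t 0 1), F t 0 0] +
        (2 * ω) • (!![0, -1; 1, 0] * F' t) - ω ^ 2 • F t = 0) :
    let J : ℝ → ℝ := fun t =>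
      F t 0 0 * F' t 1 0 + F t 0 1 * F' t 1 1 - F t 1 0 * F' t 0 0 - F t 1 1 * F' t 0 1
    let G : ℝ → ℝ := fun t =>
      (F t 0 0) ^ 2 + (F t 0 1) ^ 2 + (F t 1 0) ^ 2 + (F t 1 1) ^ 2
    ∀ t₁ t₂ : ℝ, J t₁ + ω * G t₁ = J t₂ + ω * G t₂ := by
  intro J G
  have hJ : J = fun t => angularMomentum (F t) (F' t) :=
    funext fun t => (angularMomentum_apply ..).symm
  have hG : G = fun t => frobeniusForm (F t) (F t) := funext fun t => by
    simp [G, frobeniusForm_apply, Fin.sum_univ_two, sq, add_assoc]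
  have hA : ∀ t, HasDerivAt (fun t => J t + ω * G t) 0 t := by
    intro t
    have hacc := hode t
    rw [← adjugate_transpose_fin_two] at hacc
    rw [hJ, hG]
    refine ((angularMomentum.hasDerivAt_of_bilinear (hF t) (hF' t)).add
      ((frobeniusForm.hasDerivAt_of_bilinear (hF t) (hF t)).const_mul ω)).congr_deriv ?_
    rw [angularMomentum_eq_of_accel hacc, angularMomentum_self, frobeniusForm_comm (F' t)]
    ring
  exact is_const_of_deriv_eq_zero (fun t => (hA t).differentiableAt) (fun t => (hA t).deriv)

/-- Along any solution of `F̈ᵢₖ + ∂U/∂Fᵢₖ + 2ω(LḞ)ᵢₖ − ω²Fᵢₖ = 0` (case `δ = 1`,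
`k = 1`, `l = 2ω`, `U = U₀(det F)^(1−γ)`), with
`J = F₁₁Ḟ₂₁ + F₁₂Ḟ₂₂ − F₂₁Ḟ₁₁ − F₂₂Ḟ₁₂` and `G = Σᵢₖ Fᵢₖ²`, the quantity
`A = J + ωG` is constant in time. -/
theorem first_integral_A (U₀ γ ω : ℝ) (hU₀ : 0 < U₀) (hγ : 1 < γ)
    (F F' F'' : ℝ → Matrix (Fin 2) (Fin 2) ℝ)
    (hdet : ∀ t, 0 < (F t).det)
    (hF : ∀ t, HasDerivAt F (F' t) t)
    (hF' : ∀ t, HasDerivAt F' (F'' t) t)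
    (hode : ∀ t : ℝ,
      F'' t + (U₀ * (1 - γ) * (F t).det ^ (-γ)) •
          !![F t 1 1, -(F t 1 0); -(F t 0 1), F t 0 0] +
        (2 * ω) • (!![0, -1; 1, 0] * F' t) - ω ^ 2 • F t = 0) :
    let J : ℝ → ℝ := fun t =>
      F t 0 0 * F' t 1 0 + F t 0 1 * F' t 1 1 - F t 1 0 * F' t 0 0 - F t 1 1 * F' t 0 1
    let G : ℝ → ℝ := fun t =>
      (F t 0 0) ^ 2 + (F t 0 1) ^ 2 + (F t 1 0) ^ 2 + (F t 1 1) ^ 2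
    ∀ t₁ t₂ : ℝ, J t₁ + ω * G t₁ = J t₂ + ω * G t₂ :=
  first_integral_A_general U₀ γ ω F F' F'' hF hF' hode
end
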